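/- Let R be a commutative ring and x_1, ..., x_n a regular sequence in R with I = (x_1, ..., x_n). Then multiplication by x_1 on the I-adic completion R^∧_I is injective, and the natural map R^∧_I/(x_1) → (R/x_1)^∧_I to the I-adic completion of R/(x_1) is an isomorphism. -/

import Mathlib

/-!
A regular sequence `x` is quasi-regular: a form of degree `d` whose value at `x` lies in
`I^(d+1)` has all its coefficients in `I`, i.e. `gr_I R` is the polynomial ring over `R/I`.
This goes by induction on the length of the sequence and, inside, on `d`. Since `X_1` is a
non-zero-divisor on polynomials over `R/I`, it follows that `x_1 r ∈ I^(k+1)` forces `r ∈ I^k`.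

This colon condition is all that is used on the completion. If `x_1 • (y_k) = 0`, then
`x_1 y_(k+1) ∈ I^(k+1)`, so `y_(k+1) ∈ I^k` and hence `y_k ∈ I^k`. If `(y_k)` dies in `(R/x_1)^∧`,
write `y_k ≡ x_1 c_k mod I^k`; the colon condition makes `(c_(k+1))` Cauchy, and its limit
`c` satisfies `y = x_1 c`.
-/

/-- The ideal generated by `x j` for `j < i`. -/
def prevIdeal {R : Type*} [CommRing R] {n : ℕ} (x : Fin n → R) (i : Fin n) : Ideal R :=
  Ideal.span {y | ∃ j : Fin n, j < i ∧ x j = y}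

/-- `x` is a regular sequence: each `x i` is a non-zero-divisor modulo the previous ones. -/
def IsRegularSeq {R : Type*} [CommRing R] {n : ℕ} (x : Fin n → R) : Prop :=
  ∀ i : Fin n, ∀ r : R, x i * r ∈ prevIdeal x i → r ∈ prevIdeal x i

namespace MvPolynomial

variable {R : Type*} [CommRing R] {σ τ : Type*}

theorem homogeneousComponent_X_mul (i : σ) (n : ℕ) (p : MvPolynomial σ R) :
    homogeneousComponent (n + 1) (X i * p) = X i * homogeneousComponent n p := by
  let := gradedAlgebra (σ := σ) (R := R)
  have := DirectSum.coe_decompose_mul_add_of_left_mem (homogeneousSubmodule σ R) (j := n)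
    (b := p) (isHomogeneous_X R i)
  rw [add_comm 1 n] at this
  simpa only [← decomposition.decompose'_apply, DirectSum.Decomposition.decompose'_eq] using this

theorem exists_eq_rename_some_add_X_none_mul (F : MvPolynomial (Option σ) R) :
    ∃ F₀ H, F = rename some F₀ + X none * H := by
  induction F using MvPolynomial.induction_on with
  | C a => exact ⟨C a, 0, by simp⟩
  | add p q hp hq =>
    obtain ⟨p₀, P, rfl⟩ := hp
    obtain ⟨q₀, Q, rfl⟩ := hq
    exact ⟨p₀ + q₀, P + Q, by simp only [map_add]; ring⟩
  | mul_X p i hp =>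
    obtain ⟨p₀, P, rfl⟩ := hp
    cases i with
    | none => exact ⟨0, rename some p₀ + X none * P, by simp only [map_zero]; ring⟩
    | some j => exact ⟨p₀ * X j, P * X (some j), by simp only [map_mul, rename_X]; ring⟩

theorem IsHomogeneous.exists_eq_rename_some_add_X_none_mul {F : MvPolynomial (Option σ) R}
    {d : ℕ} (hF : F.IsHomogeneous (d + 1)) :
    ∃ F₀ H, F₀.IsHomogeneous (d + 1) ∧ H.IsHomogeneous d ∧ F = rename some F₀ + X none * H := by
  obtain ⟨F₀, H, hFH⟩ := F.exists_eq_rename_some_add_X_none_mul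
  refine ⟨homogeneousComponent (d + 1) F₀, homogeneousComponent d H,
    homogeneousComponent_isHomogeneous _ _, homogeneousComponent_isHomogeneous _ _, ?_⟩
  rw [rename_homogeneousComponent, ← homogeneousComponent_X_mul, ← map_add, ← hFH,
    homogeneousComponent_eq_self hF]

theorem rename_mem_map_C {I : Ideal R} {F : MvPolynomial σ R} (f : σ → τ)
    (hF : F ∈ I.map C) : rename f F ∈ I.map C := by
  have h := Ideal.mem_map_of_mem (rename (R := R) f : MvPolynomial σ R →+* MvPolynomial τ R) hF
  rwa [Ideal.map_map, ← algebraMap_eq, (rename f).comp_algebraMap] at h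

theorem mem_map_C_of_X_mul_mem {I : Ideal R} {F : MvPolynomial σ R} (i : σ)
    (hF : X i * F ∈ I.map C) : F ∈ I.map C := by
  rw [mem_map_C_iff] at hF ⊢
  intro c
  have := hF (Finsupp.single i 1 + c)
  rwa [coeff_X_mul] at this

theorem mem_map_C_of_C_mul_mem {I : Ideal R} {F : MvPolynomial σ R} {t : R}
    (ht : ∀ r, t * r ∈ I → r ∈ I) (hF : C t * F ∈ I.map C) : F ∈ I.map C := by
  rw [mem_map_C_iff] at hF ⊢
  exact fun c => ht _ (by simpa only [coeff_C_mul] using hF c)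

end MvPolynomial

open MvPolynomial

theorem Ideal.mem_mul_span_pow_iff_exists_isHomogeneous {R ι : Type*} [CommRing R] {A : Ideal R} {v : ι → R}
    {d : ℕ} {r : R} :
    r ∈ A * Ideal.span (Set.range v) ^ d ↔
      ∃ F : MvPolynomial ι R, F.IsHomogeneous d ∧ F ∈ A.map C ∧ eval v F = r := by
  constructor
  · intro hr
    refine Submodule.mul_induction_on hr (fun a ha b hb => ?_) ?_
    · obtain ⟨G, hG, rfl⟩ := (Ideal.mem_span_pow_iff_exists_isHomogeneous v b).mp hb
      exact ⟨C a * G, hG.C_mul a, Ideal.mul_mem_right _ _ (Ideal.mem_map_of_mem C ha),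
        by simp⟩
    · rintro _ _ ⟨F, hF, hFA, rfl⟩ ⟨G, hG, hGA, rfl⟩
      exact ⟨F + G, hF.add hG, add_mem hFA hGA, map_add _ _ _⟩
  · rintro ⟨F, hF, hFA, rfl⟩
    rw [F.as_sum, map_sum]
    refine Ideal.sum_mem _ fun c hc => ?_
    have hdeg : c.degree = d := by
      rw [Finsupp.degree_eq_weight_one]
      exact hF (mem_support_iff.mp hc)
    rw [eval_monomial, ← one_mul (c.prod _), ← eval_monomial]
    exact Ideal.mul_mem_mul (MvPolynomial.mem_map_C_iff.mp hFA c)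
      ((Ideal.mem_span_pow_iff_exists_isHomogeneous v _).mpr
        ⟨_, isHomogeneous_monomial 1 hdeg, rfl⟩)

section QuasiRegular

variable {R : Type*} [CommRing R] {ι κ : Type*}

def IsQuasiRegularInDegree (v : ι → R) (d : ℕ) : Prop :=
  ∀ F : MvPolynomial ι R, F.IsHomogeneous d →
    eval v F ∈ Ideal.span (Set.range v) ^ (d + 1) → F ∈ (Ideal.span (Set.range v)).map C

def IsQuasiRegular (v : ι → R) : Prop := ∀ d, IsQuasiRegularInDegree v d

theorem isQuasiRegularInDegree_zero (v : ι → R) : IsQuasiRegularInDegree v 0 := by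
  intro F hF hFv
  rw [← homogeneousComponent_eq_self hF, homogeneousComponent_zero] at hFv ⊢
  rw [eval_C, zero_add, pow_one] at hFv
  exact Ideal.mem_map_of_mem C hFv

theorem isQuasiRegular_of_isEmpty [IsEmpty ι] (v : ι → R) : IsQuasiRegular v := by
  intro d F _ hFv
  obtain ⟨a, rfl⟩ := C_surjective ι F
  rw [eval_C] at hFv
  exact Ideal.mem_map_of_mem C (Ideal.pow_le_self d.succ_ne_zero hFv)

theorem IsQuasiRegularInDegree.of_eval_eq_zero {v : ι → R} {d : ℕ}
    (h : ∀ F : MvPolynomial ι R, F.IsHomogeneous d → eval v F = 0 →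
      F ∈ (Ideal.span (Set.range v)).map C) :
    IsQuasiRegularInDegree v d := by
  intro F hF hFv
  rw [pow_succ', Ideal.mem_mul_span_pow_iff_exists_isHomogeneous] at hFv
  obtain ⟨G, hG, hGI, hGF⟩ := hFv
  simpa using add_mem (h (F - G) (hF.sub hG) (by rw [map_sub, hGF, sub_self])) hGI

theorem IsQuasiRegular.comp_equiv {v : ι → R} (hv : IsQuasiRegular v) (e : κ ≃ ι) :
    IsQuasiRegular (v ∘ e) := by
  intro d F hF hFv
  rw [EquivLike.range_comp] at hFv ⊢
  have := hv d (rename e F) hF.rename_isHomogeneous (by rwa [eval_rename])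
  simpa [rename_rename] using rename_mem_map_C e.symm this

theorem IsQuasiRegular.mem_pow_of_mul_mem_pow {v : ι → R} (hv : IsQuasiRegular v) {t : R}
    (ht : ∀ r, t * r ∈ Ideal.span (Set.range v) → r ∈ Ideal.span (Set.range v)) :
    ∀ s r, t * r ∈ Ideal.span (Set.range v) ^ s → r ∈ Ideal.span (Set.range v) ^ s
  | 0, _, _ => by simp
  | s + 1, r, hr => by
    obtain ⟨F, hF, rfl⟩ := (Ideal.mem_span_pow_iff_exists_isHomogeneous v r).mp
      (hv.mem_pow_of_mul_mem_pow ht s r (Ideal.pow_le_pow_right s.le_succ hr))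
    have hCF : C t * F ∈ (Ideal.span (Set.range v)).map C :=
      hv s _ (hF.C_mul t) (by simpa using hr)
    rw [pow_succ', Ideal.mem_mul_span_pow_iff_exists_isHomogeneous]
    exact ⟨F, hF, mem_map_C_of_C_mul_mem ht hCF, rfl⟩

theorem IsQuasiRegular.mem_pow_of_mul_mem_pow_succ {v : ι → R} (hv : IsQuasiRegular v) (i : ι) :
    ∀ k r, v i * r ∈ Ideal.span (Set.range v) ^ (k + 1) → r ∈ Ideal.span (Set.range v) ^ k
  | 0, _, _ => by simp
  | k + 1, r, hr => by
    obtain ⟨F, hF, rfl⟩ := (Ideal.mem_span_pow_iff_exists_isHomogeneous v r).mp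
      (hv.mem_pow_of_mul_mem_pow_succ i k r (Ideal.pow_le_pow_right (k + 1).le_succ hr))
    have hXF : X i * F ∈ (Ideal.span (Set.range v)).map C :=
      hv (k + 1) _ (by simpa [add_comm] using (isHomogeneous_X R i).mul hF) (by simpa using hr)
    rw [pow_succ', Ideal.mem_mul_span_pow_iff_exists_isHomogeneous]
    exact ⟨F, hF, mem_map_C_of_X_mul_mem i hXF, rfl⟩

theorem IsQuasiRegular.option_elim {w : ι → R} (hw : IsQuasiRegular w) {t : R}
    (ht : ∀ r, t * r ∈ Ideal.span (Set.range w) → r ∈ Ideal.span (Set.range w)) :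
    IsQuasiRegular (fun o : Option ι => o.elim t w) := by
  set u := fun o : Option ι => o.elim t w
  have hJI : Ideal.span (Set.range w) ≤ Ideal.span (Set.range u) :=
    Ideal.span_mono (Set.range_comp_subset_range some u)
  have htI : t ∈ Ideal.span (Set.range u) := Ideal.subset_span ⟨none, rfl⟩
  intro d
  induction d with
  | zero => exact isQuasiRegularInDegree_zero u
  | succ d ih =>
    refine .of_eval_eq_zero fun F hF hFu => ?_
    -- With `F = F₀ + X_t H` and `J = (w)`: `t H(u) = -F₀(w) ∈ J^(d+1)` puts `H(u)` in `J^(d+1)`,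
    -- so degree `d` handles `H`, and then the quasi-regularity of `w` handles `F₀`.
    obtain ⟨F₀, H, hF₀, hH, rfl⟩ := hF.exists_eq_rename_some_add_X_none_mul
    have hsum : eval w F₀ + t * eval u H = 0 := by
      rw [map_add, map_mul, eval_rename, eval_X] at hFu
      exact hFu
    have hHw : eval u H ∈ Ideal.span (Set.range w) ^ (d + 1) := by
      refine hw.mem_pow_of_mul_mem_pow ht _ _ ?_
      rw [eq_neg_of_add_eq_zero_right hsum]
      exact neg_mem ((Ideal.mem_span_pow_iff_exists_isHomogeneous w _).mpr ⟨F₀, hF₀, rfl⟩)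
    have hHI : H ∈ (Ideal.span (Set.range u)).map C := ih H hH (Ideal.pow_right_mono hJI _ hHw)
    obtain ⟨P, hP, hPH⟩ := (Ideal.mem_span_pow_iff_exists_isHomogeneous w _).mp hHw
    have hF₀P : F₀ + C t * P ∈ (Ideal.span (Set.range w)).map C :=
      hw (d + 1) _ (hF₀.add (hP.C_mul t)) (by simp [hPH, hsum])
    have hF₀I : F₀ ∈ (Ideal.span (Set.range u)).map C := by
      simpa using sub_mem (Ideal.map_mono hJI hF₀P)
        (Ideal.mul_mem_right P _ (Ideal.mem_map_of_mem C htI))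
    exact add_mem (rename_mem_map_C some hF₀I) (Ideal.mul_mem_left _ _ hHI)

theorem prevIdeal_castSucc {m : ℕ} (v : Fin (m + 1) → R) (i : Fin m) :
    prevIdeal (v ∘ Fin.castSucc) i = prevIdeal v i.castSucc := by
  refine congrArg Ideal.span (Set.ext fun y => ⟨?_, ?_⟩)
  · rintro ⟨j, hj, rfl⟩
    exact ⟨j.castSucc, Fin.castSucc_lt_castSucc_iff.mpr hj, rfl⟩
  · rintro ⟨j, hj, rfl⟩
    obtain ⟨j, rfl⟩ := Fin.exists_castSucc_eq.mpr (Fin.ne_last_of_lt hj)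
    exact ⟨j, Fin.castSucc_lt_castSucc_iff.mp hj, rfl⟩

theorem prevIdeal_last {m : ℕ} (v : Fin (m + 1) → R) :
    prevIdeal v (Fin.last m) = Ideal.span (Set.range (v ∘ Fin.castSucc)) := by
  refine congrArg Ideal.span (Set.ext fun y => ⟨?_, ?_⟩)
  · rintro ⟨j, hj, rfl⟩
    obtain ⟨j, rfl⟩ := Fin.exists_castSucc_eq.mpr (Fin.ne_last_of_lt hj)
    exact ⟨j, rfl⟩
  · rintro ⟨j, rfl⟩
    exact ⟨j.castSucc, Fin.castSucc_lt_last j, rfl⟩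

theorem IsRegularSeq.castSucc {m : ℕ} {v : Fin (m + 1) → R} (hv : IsRegularSeq v) :
    IsRegularSeq (v ∘ Fin.castSucc) := by
  intro i r
  rw [prevIdeal_castSucc]
  exact hv i.castSucc r

theorem IsRegularSeq.isQuasiRegular :
    ∀ {m : ℕ} {v : Fin m → R}, IsRegularSeq v → IsQuasiRegular v
  | 0, v, _ => isQuasiRegular_of_isEmpty v
  | m + 1, v, hv => by
    have ht := hv (Fin.last m)
    rw [prevIdeal_last] at ht
    convert (hv.castSucc.isQuasiRegular.option_elim ht).comp_equiv finSuccEquivLast using 1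
    funext j
    induction j using Fin.lastCases <;> simp

end QuasiRegular

namespace AdicCompletion

variable {R : Type*} [CommRing R] {I : Ideal R} {a : R}

theorem AdicCauchySequence.sub_mem_pow (b : AdicCauchySequence I R) {m n : ℕ} (h : m ≤ n) :
    b m - b n ∈ I ^ m := by
  have := b.property h
  rwa [SModEq.sub_mem, smul_eq_mul, Ideal.mul_top] at this

theorem mk_val_eq_zero_iff {b : AdicCauchySequence I R} {k : ℕ} :
    (mk I R b).val k = 0 ↔ b k ∈ I ^ k := by
  rw [mk_apply_coe, Submodule.mkQ_apply, Submodule.Quotient.mk_eq_zero, smul_eq_mul,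
    Ideal.mul_top]

theorem smul_right_injective_of_mul_mem_pow_succ
    (ha : ∀ k r, a * r ∈ I ^ (k + 1) → r ∈ I ^ k) :
    Function.Injective (a • · : AdicCompletion I R → AdicCompletion I R) := by
  suffices h : ∀ y : AdicCompletion I R, a • y = 0 → y = 0 from
    fun y z hyz => sub_eq_zero.mp (h _ (by rw [smul_sub, sub_eq_zero]; exact hyz))
  intro y hy
  induction y using AdicCompletion.induction_on with | h b => ?_
  rw [← map_smul] at hy
  ext k
  have hb := mk_val_eq_zero_iff.mp (congrArg (fun y => y.val (k + 1)) hy)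
  rw [AdicCauchySequence.smul_apply, smul_eq_mul] at hb
  rw [val_zero_apply, mk_val_eq_zero_iff]
  simpa using add_mem (b.sub_mem_pow (k.le_add_right 1)) (ha k _ hb)

theorem smul_eq_zero_of_forall_smul_eq_zero {N : Type*} [AddCommGroup N] [Module R N]
    (hN : ∀ n : N, a • n = 0) (w : AdicCompletion I N) : a • w = 0 := by
  ext k
  obtain ⟨n, hn⟩ := Submodule.Quotient.mk_surjective _ (w.val k)
  rw [val_smul_apply, val_zero_apply, ← hn, ← Submodule.Quotient.mk_smul, hN,
    Submodule.Quotient.mk_zero]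

theorem exists_sub_mul_mem_pow_of_map_mkQ_eq_zero {b : AdicCauchySequence I R}
    (h : map I (Ideal.span {a}).mkQ (mk I R b) = 0) (k : ℕ) : ∃ c, b k - a * c ∈ I ^ k := by
  have hk : (Ideal.span {a}).mkQ (b k) ∈ (I ^ k • ⊤ : Submodule R (R ⧸ Ideal.span {a})) := by
    have := congrArg (fun y => y.val k) h
    rwa [map_mk, mk_apply_coe, val_zero_apply, Submodule.mkQ_apply,
      AdicCauchySequence.map_apply_coe, Submodule.Quotient.mk_eq_zero] at this
  rw [← Submodule.range_mkQ (Ideal.span {a}), ← Submodule.map_top, ← Submodule.map_smul'',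
    ← Submodule.mem_comap, Submodule.comap_map_mkQ, smul_eq_mul, Ideal.mul_top] at hk
  obtain ⟨_, hs, t, ht, hst⟩ := Submodule.mem_sup.mp hk
  obtain ⟨c, rfl⟩ := Ideal.mem_span_singleton'.mp hs
  exact ⟨c, by rwa [← hst, mul_comm, add_sub_cancel_left]⟩

theorem exists_eq_smul_of_map_mkQ_eq_zero (ha : ∀ k r, a * r ∈ I ^ (k + 1) → r ∈ I ^ k)
    {y : AdicCompletion I R} (hy : map I (Ideal.span {a}).mkQ y = 0) : ∃ z, y = a • z := by
  induction y using AdicCompletion.induction_on with | h b => ?_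
  choose c hc using exists_sub_mul_mem_pow_of_map_mkQ_eq_zero hy
  have hcau (k : ℕ) : c (k + 1) ≡ c (k + 2) [SMOD (I ^ k • ⊤ : Ideal R)] := by
    rw [SModEq.sub_mem, smul_eq_mul, Ideal.mul_top]
    refine ha k _ ?_
    convert add_mem (sub_mem (b.sub_mem_pow ((k + 1).le_add_right 1)) (hc (k + 1)))
      (Ideal.pow_le_pow_right ((k + 1).le_add_right 1) (hc (k + 2))) using 1
    ring
  refine ⟨mk I R (AdicCauchySequence.mk I R (fun k => c (k + 1)) hcau), ?_⟩
  rw [← map_smul, ← sub_eq_zero, ← map_sub]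
  ext k
  rw [val_zero_apply, mk_val_eq_zero_iff]
  convert add_mem (b.sub_mem_pow (k.le_add_right 1))
    (Ideal.pow_le_pow_right (k.le_add_right 1) (hc (k + 1))) using 1
  simp only [AdicCauchySequence.sub_apply, AdicCauchySequence.smul_apply, smul_eq_mul,
    AdicCauchySequence.mk_coe]
  ring

theorem map_mkQ_span_singleton_eq_zero_iff (ha : ∀ k r, a * r ∈ I ^ (k + 1) → r ∈ I ^ k)
    (y : AdicCompletion I R) : map I (Ideal.span {a}).mkQ y = 0 ↔ ∃ z, y = a • z := by
  refine ⟨exists_eq_smul_of_map_mkQ_eq_zero ha, ?_⟩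
  rintro ⟨z, rfl⟩
  rw [LinearMap.map_smul_of_tower]
  refine smul_eq_zero_of_forall_smul_eq_zero (fun n => ?_) _
  obtain ⟨r, rfl⟩ := Submodule.mkQ_surjective _ n
  rw [← map_smul, Submodule.mkQ_apply, Submodule.Quotient.mk_eq_zero, smul_eq_mul]
  exact Ideal.mul_mem_right _ _ (Ideal.mem_span_singleton_self a)

end AdicCompletion

/-- For a regular sequence `x_1, ..., x_n` generating `I`: multiplication by `x_1` is
injective on the `I`-adic completion `R^∧_I`, and the natural map
`R^∧_I/(x_1) → (R/x_1)^∧_I` is an isomorphism. The latter is expressed by saying that the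
natural map `R^∧_I → (R/x_1)^∧_I` is surjective with kernel the ideal generated by the
image of `x_1`. -/
theorem completion_mul_injective_and_quotient_iso
    {R : Type*} [CommRing R] {n : ℕ} (hn : 0 < n) (x : Fin n → R)
    (hreg : IsRegularSeq x) (I : Ideal R) (hI : I = Ideal.span (Set.range x)) :
    Function.Injective
      (fun y : AdicCompletion I R => algebraMap R (AdicCompletion I R) (x ⟨0, hn⟩) * y) ∧
    Function.Surjective (AdicCompletion.map I (Ideal.span {x ⟨0, hn⟩}).mkQ) ∧
    ∀ y : AdicCompletion I R,
      AdicCompletion.map I (Ideal.span {x ⟨0, hn⟩}).mkQ y = 0 ↔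
        ∃ z : AdicCompletion I R,
          y = algebraMap R (AdicCompletion I R) (x ⟨0, hn⟩) * z := by
  subst hI
  have hcolon := hreg.isQuasiRegular.mem_pow_of_mul_mem_pow_succ ⟨0, hn⟩
  simp only [← Algebra.smul_def]
  exact ⟨AdicCompletion.smul_right_injective_of_mul_mem_pow_succ hcolon,
    AdicCompletion.map_surjective _ (Submodule.mkQ_surjective _),
    AdicCompletion.map_mkQ_span_singleton_eq_zero_iff hcolon⟩
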